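/- Let G be a connected finite simple graph with n vertices and minimum degree δ. Then G has a restrained dominating set of cardinality at most (2(1 + ln(δ+1))/(δ+1))·n; that is, γ_r(G) ≤ 2n(1 + ln(δ+1))/(δ+1). -/

import Mathlib

/-!
Choose `A` at random, each vertex independently with probability `p = ln(δ+1)/(δ+1)`, and add
the set `B` of vertices not dominated by `A` and the set `C` of vertices outside `A ∪ B` all of
whose neighbours lie in `A ∪ B`; then `A ∪ B ∪ C` is a restrained dominating set. A vertex lies
in `B` with probability at most `(1-p)^(δ+1)`. It lies in `C` only if all its neighbours are in
`A` or, for some neighbour `w`, all smaller neighbours are in `A` and the closed neighbourhood of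
`w` misses `A`; ordering the neighbours, this has probability at most
`p^δ + ∑ₖ pᵏ (1-p)^(δ+1) ≤ p^δ + (1-p)^δ`. Hence some `A` gives a set of size at most
`n (p + (1-p)^(δ+1) + p^δ + (1-p)^δ) ≤ 2n(1 + ln(δ+1))/(δ+1)` when `δ ≥ 4`; for `δ ≤ 3` the
whole vertex set is small enough.
-/

/-- A set `D` is a restrained dominating set of `G` if every vertex not in `D`
is adjacent to a vertex in `D` and to a vertex outside `D`. -/
def IsRestrainedDominatingSet {V : Type*} (G : SimpleGraph V) (D : Finset V) : Prop :=
  (∀ v, v ∉ D → ∃ u ∈ D, G.Adj v u) ∧ (∀ v, v ∉ D → ∃ u, u ∉ D ∧ G.Adj v u)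

/-- The restrained domination number: minimum cardinality of a restrained dominating set. -/
noncomputable def restrainedDominationNumber {V : Type*} [Fintype V] (G : SimpleGraph V) : ℕ :=
  sInf {n | ∃ D : Finset V, IsRestrainedDominatingSet G D ∧ D.card = n}

open Finset Real

lemma restrainedDominationNumber_le_card {V : Type*} [Fintype V] {G : SimpleGraph V}
    {D : Finset V} (hD : IsRestrainedDominatingSet G D) : restrainedDominationNumber G ≤ #D :=
  Nat.sInf_le ⟨D, hD, rfl⟩

namespace Finset

lemma sum_card_filter_lt {α M : Type*} [LinearOrder α] [AddCommMonoid M] (s : Finset α)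
    (f : ℕ → M) : ∑ w ∈ s, f #{u ∈ s | u < w} = ∑ i ∈ range #s, f i := by
  induction s using Finset.induction_on_max with
  | empty => simp
  | insert a s ha ih =>
    have ha' : a ∉ s := fun h ↦ lt_irrefl a (ha a h)
    have hrank : ∀ w ∈ s, {u ∈ insert a s | u < w} = {u ∈ s | u < w} := fun w hw ↦ by
      rw [filter_insert, if_neg (ha w hw).not_gt]
    rw [sum_insert ha', sum_congr rfl fun w hw ↦ by rw [hrank w hw], ih, card_insert_of_notMem ha',
      sum_range_succ, add_comm, filter_insert, if_neg (lt_irrefl a),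
      filter_true_of_mem fun u hu ↦ ha u hu]

lemma sum_filter_le_add_sum_filter {β ι : Type*} {f : β → ℝ} (hf : ∀ b, 0 ≤ f b) (s : Finset β)
    (t : Finset ι) (P Q : β → Prop) (R : ι → β → Prop) [DecidablePred P] [DecidablePred Q]
    [∀ i, DecidablePred (R i)] (h : ∀ b ∈ s, P b → Q b ∨ ∃ i ∈ t, R i b) :
    ∑ b ∈ s with P b, f b ≤ ∑ b ∈ s with Q b, f b + ∑ i ∈ t, ∑ b ∈ s with R i b, f b := by
  simp only [sum_filter]
  rw [sum_comm, ← sum_add_distrib]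
  refine sum_le_sum fun b hb ↦ ?_
  have hR : ∀ i ∈ t, 0 ≤ if R i b then f b else 0 := fun i _ ↦ by split_ifs <;> simp [hf]
  have hR_sum := sum_nonneg hR
  split_ifs with hP hQ
  · linarith
  · obtain hQ' | ⟨i, hi, hRi⟩ := h b hb hP
    · exact absurd hQ' hQ
    · simpa [hRi] using single_le_sum hR hi
  all_goals linarith [hf b]

lemma sum_mul_card_le {ι β : Type*} [Fintype β] [DecidableEq β] (s : Finset ι) (w : ι → ℝ)
    (S : ι → Finset β) {c : ℝ} (hc : ∀ b, ∑ i ∈ s with b ∈ S i, w i ≤ c) :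
    ∑ i ∈ s, w i * #(S i) ≤ Fintype.card β * c := by
  have hcount : ∑ i ∈ s, w i * #(S i) = ∑ b, ∑ i ∈ s with b ∈ S i, w i := by
    simp only [sum_filter]
    rw [sum_comm]
    refine sum_congr rfl fun i _ ↦ ?_
    rw [sum_ite_mem, univ_inter, sum_const, nsmul_eq_mul, mul_comm]
  rw [hcount, ← nsmul_eq_mul, ← card_univ]
  exact sum_le_card_nsmul _ _ _ fun b _ ↦ hc b

end Finset

section BernoulliWeight

variable {α : Type*} [Fintype α] [DecidableEq α] {p : ℝ}

/-- The probability of the outcome `A` when each element is put into the random set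
independently with probability `p`. -/
noncomputable def bernoulliWeight (p : ℝ) (A : Finset α) : ℝ := p ^ #A * (1 - p) ^ #Aᶜ

lemma bernoulliWeight_nonneg (hp0 : 0 ≤ p) (hp1 : p ≤ 1) (A : Finset α) :
    0 ≤ bernoulliWeight p A :=
  mul_nonneg (pow_nonneg hp0 _) (pow_nonneg (sub_nonneg.2 hp1) _)

lemma sum_bernoulliWeight (p : ℝ) : ∑ A : Finset α, bernoulliWeight p A = 1 := by
  simp only [bernoulliWeight, card_compl]
  rw [Fintype.sum_pow_mul_eq_add_pow, add_sub_cancel, one_pow]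

lemma exists_le_sum_bernoulliWeight_mul (hp0 : 0 ≤ p) (hp1 : p ≤ 1) (f : Finset α → ℝ) :
    ∃ A, f A ≤ ∑ B, bernoulliWeight p B * f B := by
  obtain ⟨A, -, hA⟩ := exists_min_image univ f univ_nonempty
  refine ⟨A, ?_⟩
  calc f A = ∑ B, bernoulliWeight p B * f A := by rw [← sum_mul, sum_bernoulliWeight, one_mul]
    _ ≤ ∑ B, bernoulliWeight p B * f B := sum_le_sum fun B _ ↦
        mul_le_mul_of_nonneg_left (hA B (mem_univ B)) (bernoulliWeight_nonneg hp0 hp1 B)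

lemma sum_bernoulliWeight_le (hp0 : 0 ≤ p) (hp1 : p ≤ 1) (P : Finset α → Prop) [DecidablePred P]
    (S T : Finset α) (hP : ∀ A, P A → S ⊆ A ∧ Disjoint A T) :
    ∑ A with P A, bernoulliWeight p A ≤ p ^ #S * (1 - p) ^ #T := by
  set f : α → ℝ := fun i ↦ if i ∉ T then p else 0
  set g : α → ℝ := fun i ↦ if i ∉ S then 1 - p else 0
  have hfg : ∀ A : Finset α, (∏ i ∈ A, f i) * ∏ i ∈ univ \ A, g i =
      if S ⊆ A ∧ Disjoint A T then bernoulliWeight p A else 0 := by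
    intro A
    simp only [f, g, prod_ite_zero, prod_const, ← compl_eq_univ_sdiff, bernoulliWeight]
    have hT : (∀ i ∈ A, i ∉ T) ↔ Disjoint A T := disjoint_left.symm
    have hS : (∀ i ∈ Aᶜ, i ∉ S) ↔ S ⊆ A := by
      simp only [mem_compl, not_imp_not, subset_iff]
    rw [ite_zero_mul_ite_zero]
    exact if_congr (by rw [hT, hS, and_comm]) rfl rfl
  calc ∑ A with P A, bernoulliWeight p A
      ≤ ∑ A : Finset α, if S ⊆ A ∧ Disjoint A T then bernoulliWeight p A else 0 := by
        rw [← sum_filter]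
        exact sum_le_sum_of_subset_of_nonneg (fun A hA ↦ by simpa using hP A (by simpa using hA))
          fun A _ _ ↦ bernoulliWeight_nonneg hp0 hp1 A
    _ = ∏ i, (f i + g i) := by rw [prod_add, ← powerset_univ]; simp only [hfg]
    _ ≤ ∏ i, (if i ∈ S then p else 1) * (if i ∈ T then 1 - p else 1) := by
        gcongr with i
        simp only [f, g]; split_ifs <;> nlinarith
    _ = p ^ #S * (1 - p) ^ #T := by
        rw [prod_mul_distrib, prod_ite_mem, prod_ite_mem]; simp

lemma sum_bernoulliWeight_mem_le (hp0 : 0 ≤ p) (hp1 : p ≤ 1) (a : α) :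
    ∑ A with a ∈ A, bernoulliWeight p A ≤ p := by
  simpa using sum_bernoulliWeight_le hp0 hp1 (a ∈ ·) {a} ∅ fun A hA ↦ by simpa using hA

end BernoulliWeight

namespace SimpleGraph

variable {V : Type*} [Fintype V] [DecidableEq V] (G : SimpleGraph V) [DecidableRel G.Adj]

def closedNeighborFinset (v : V) : Finset V := insert v (G.neighborFinset v)

lemma card_closedNeighborFinset (v : V) : #(G.closedNeighborFinset v) = G.degree v + 1 := by
  rw [closedNeighborFinset, card_insert_of_notMem (by simp), card_neighborFinset_eq_degree]

def undominatedFinset (A : Finset V) : Finset V := {v | Disjoint A (G.closedNeighborFinset v)}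

def enclosedFinset (A : Finset V) : Finset V :=
  {v | v ∉ A ∪ G.undominatedFinset A ∧ G.neighborFinset v ⊆ A ∪ G.undominatedFinset A}

def restrainedCompletion (A : Finset V) : Finset V :=
  A ∪ G.undominatedFinset A ∪ G.enclosedFinset A

lemma isRestrainedDominatingSet_restrainedCompletion (A : Finset V) :
    IsRestrainedDominatingSet G (G.restrainedCompletion A) := by
  simp only [IsRestrainedDominatingSet, restrainedCompletion, mem_union, not_or]
  constructor
  · rintro v ⟨⟨hvA, hvB⟩, -⟩
    obtain ⟨u, huA, huN⟩ := not_disjoint_iff.mp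
      (by simpa [undominatedFinset] using hvB : ¬ Disjoint A (G.closedNeighborFinset v))
    have hvu : G.Adj v u := by
      rcases mem_insert.mp huN with rfl | hu
      · exact absurd huA hvA
      · exact (mem_neighborFinset G v u).mp hu
    exact ⟨u, Or.inl (Or.inl huA), hvu⟩
  · rintro v ⟨hvAB, hvC⟩
    have hvAB' : v ∉ A ∪ G.undominatedFinset A := by simpa using hvAB
    have hN : ¬ G.neighborFinset v ⊆ A ∪ G.undominatedFinset A := fun h ↦
      hvC (mem_filter.mpr ⟨mem_univ v, hvAB', h⟩)
    obtain ⟨u, huN, huAB⟩ := not_subset.mp hN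
    have hvu : G.Adj v u := (mem_neighborFinset G v u).mp huN
    refine ⟨u, ⟨by simpa using huAB, fun huC ↦ hvAB' ?_⟩, hvu⟩
    exact (mem_filter.mp huC).2.2 ((mem_neighborFinset G u v).mpr hvu.symm)

lemma card_restrainedCompletion_le (A : Finset V) :
    #(G.restrainedCompletion A) ≤ #A + #(G.undominatedFinset A) + #(G.enclosedFinset A) :=
  (card_union_le _ _).trans (Nat.add_le_add_right (card_union_le _ _) _)

/-- If not all neighbours of an enclosed vertex lie in `A`, its least neighbour outside `A` is
undominated. -/
lemma subset_or_exists_undominated_of_mem_enclosedFinset [LinearOrder V] {A : Finset V} {v : V}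
    (hv : v ∈ G.enclosedFinset A) :
    G.neighborFinset v ⊆ A ∨ ∃ w ∈ G.neighborFinset v,
      {u ∈ G.neighborFinset v | u < w} ⊆ A ∧ Disjoint A (G.closedNeighborFinset w) := by
  rw [or_iff_not_imp_left]
  intro hNA
  have hT : {u ∈ G.neighborFinset v | u ∉ A}.Nonempty := by
    obtain ⟨u, huN, huA⟩ := not_subset.mp hNA
    exact ⟨u, mem_filter.mpr ⟨huN, huA⟩⟩
  obtain ⟨hwN, hwA⟩ := mem_filter.mp (min'_mem _ hT)
  refine ⟨_, hwN, fun u hu ↦ ?_, ?_⟩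
  · obtain ⟨huN, huw⟩ := mem_filter.mp hu
    by_contra huA
    exact (min'_le _ u (mem_filter.mpr ⟨huN, huA⟩)).not_gt huw
  · have hwAB := (mem_filter.mp hv).2.2 hwN
    rw [mem_union, or_iff_right hwA] at hwAB
    exact (mem_filter.mp hwAB).2

variable {p : ℝ}

lemma sum_bernoulliWeight_mem_undominatedFinset_le (hp0 : 0 ≤ p) (hp1 : p ≤ 1) (v : V) :
    ∑ A with v ∈ G.undominatedFinset A, bernoulliWeight p A ≤ (1 - p) ^ (G.degree v + 1) := by
  simpa [card_closedNeighborFinset] using sum_bernoulliWeight_le hp0 hp1 _ ∅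
    (G.closedNeighborFinset v) fun A hA ↦ ⟨empty_subset A, by simpa [undominatedFinset] using hA⟩

lemma sum_bernoulliWeight_mem_enclosedFinset_le (hp0 : 0 ≤ p) (hp1 : p < 1) {δ : ℕ}
    (hδ : ∀ v, δ ≤ G.degree v) (v : V) :
    ∑ A with v ∈ G.enclosedFinset A, bernoulliWeight p A ≤ p ^ δ + (1 - p) ^ δ := by
  let _ : LinearOrder V := LinearOrder.lift' _ (Fintype.equivFin V).injective
  set N := G.neighborFinset v
  have hq0 : 0 < 1 - p := by linarith
  calc ∑ A with v ∈ G.enclosedFinset A, bernoulliWeight p A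
      ≤ ∑ A with N ⊆ A, bernoulliWeight p A + ∑ w ∈ N,
          ∑ A with {u ∈ N | u < w} ⊆ A ∧ Disjoint A (G.closedNeighborFinset w),
            bernoulliWeight p A :=
        sum_filter_le_add_sum_filter (bernoulliWeight_nonneg hp0 hp1.le) _ _ _ _ _
          fun A _ hA ↦ G.subset_or_exists_undominated_of_mem_enclosedFinset hA
    _ ≤ p ^ #N + ∑ w ∈ N, p ^ #{u ∈ N | u < w} * (1 - p) ^ (δ + 1) := by
        have hall := sum_bernoulliWeight_le hp0 hp1.le _ N ∅ fun A hA ↦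
          ⟨hA, disjoint_empty_right A⟩
        refine add_le_add (hall.trans_eq (by simp)) (sum_le_sum fun w _ ↦ ?_)
        refine (sum_bernoulliWeight_le hp0 hp1.le _ _ _ fun A hA ↦ hA).trans ?_
        have hw : δ + 1 ≤ #(G.closedNeighborFinset w) := by
          rw [card_closedNeighborFinset]; exact Nat.succ_le_succ (hδ w)
        exact mul_le_mul_of_nonneg_left (pow_le_pow_of_le_one hq0.le (by linarith) hw)
          (pow_nonneg hp0 _)
    _ = p ^ #N + (∑ i ∈ range #N, p ^ i) * (1 - p) ^ (δ + 1) := by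
        rw [← sum_mul, sum_card_filter_lt N (p ^ ·)]
    _ ≤ p ^ δ + p ^ 0 / (1 - p) * (1 - p) ^ (δ + 1) := by
        have hN : δ ≤ #N := G.card_neighborFinset_eq_degree v ▸ hδ v
        refine add_le_add (pow_le_pow_of_le_one hp0 hp1.le hN)
          (mul_le_mul_of_nonneg_right ?_ (pow_nonneg hq0.le _))
        rw [range_eq_Ico]
        exact geom_sum_Ico_le_of_lt_one hp0 hp1
    _ = p ^ δ + (1 - p) ^ δ := by
        field_simp
        ring

lemma sum_bernoulliWeight_mul_card_restrainedCompletion_le (hp0 : 0 ≤ p) (hp1 : p < 1) {δ : ℕ}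
    (hδ : ∀ v, δ ≤ G.degree v) :
    ∑ A, bernoulliWeight p A * #(G.restrainedCompletion A) ≤
      Fintype.card V * (p + (1 - p) ^ (δ + 1) + (p ^ δ + (1 - p) ^ δ)) := by
  have hA : ∑ A, bernoulliWeight p A * #A ≤ Fintype.card V * p :=
    sum_mul_card_le univ _ (fun A ↦ A) fun v ↦ by
      simpa using sum_bernoulliWeight_mem_le hp0 hp1.le v
  have hB : ∑ A, bernoulliWeight p A * #(G.undominatedFinset A) ≤
      Fintype.card V * (1 - p) ^ (δ + 1) := sum_mul_card_le univ _ _ fun v ↦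
    (G.sum_bernoulliWeight_mem_undominatedFinset_le hp0 hp1.le v).trans
      (pow_le_pow_of_le_one (by linarith) (by linarith) (Nat.succ_le_succ (hδ v)))
  have hC := sum_mul_card_le univ (bernoulliWeight p) G.enclosedFinset fun v ↦
    G.sum_bernoulliWeight_mem_enclosedFinset_le hp0 hp1 hδ v
  calc ∑ A, bernoulliWeight p A * #(G.restrainedCompletion A)
      ≤ ∑ A, bernoulliWeight p A *
          ((#A : ℝ) + #(G.undominatedFinset A) + #(G.enclosedFinset A)) :=
        sum_le_sum fun A _ ↦ mul_le_mul_of_nonneg_left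
          (by exact_mod_cast G.card_restrainedCompletion_le A) (bernoulliWeight_nonneg hp0 hp1.le A)
    _ = ∑ A, bernoulliWeight p A * #A + ∑ A, bernoulliWeight p A * #(G.undominatedFinset A) +
          ∑ A, bernoulliWeight p A * #(G.enclosedFinset A) := by
        rw [← sum_add_distrib, ← sum_add_distrib]
        simp only [mul_add]
    _ ≤ _ := by linarith

end SimpleGraph

lemma three_mul_succ_le_two_pow {δ : ℕ} (hδ : 4 ≤ δ) : 3 * (δ + 1) ≤ 2 ^ δ := by
  induction δ, hδ using Nat.le_induction with
  | base => norm_num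
  | succ k _ ih => rw [pow_succ]; omega

lemma four_thirds_le_log {x : ℝ} (hx : 4 ≤ x) : 4 / 3 ≤ log x := by
  have h4 : log 4 = 2 * log 2 := by
    rw [show (4 : ℝ) = 2 ^ 2 by norm_num, log_pow, Nat.cast_ofNat]
  linarith [log_le_log (by norm_num) hx, log_two_gt_d9]

lemma log_div_self_le_half {x : ℝ} (hx : 0 < x) : log x / x ≤ 1 / 2 := by
  have h := log_le_sub_one_of_pos (half_pos hx)
  rw [log_div hx.ne' two_ne_zero] at h
  rw [div_le_iff₀ hx]
  linarith [log_two_lt_d9]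

lemma one_le_two_mul_one_add_log_div {δ : ℕ} (hδ : δ ≤ 3) :
    1 ≤ 2 * (1 + log (δ + 1)) / (δ + 1) := by
  have hx : (0 : ℝ) < δ + 1 := by positivity
  rw [le_div_iff₀ hx, one_mul]
  rcases Nat.lt_or_ge δ 2 with hδ2 | hδ2
  · have : (δ : ℝ) ≤ 1 := by exact_mod_cast Nat.lt_succ_iff.mp hδ2
    linarith [log_nonneg (by linarith : (1 : ℝ) ≤ δ + 1)]
  · have h3 : (3 : ℝ) ≤ δ + 1 := by exact_mod_cast Nat.succ_le_succ hδ2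
    have h1 : 1 ≤ log (δ + 1) := by
      rw [le_log_iff_exp_le (by positivity)]
      linarith [exp_one_lt_d9]
    have : (δ : ℝ) ≤ 3 := by exact_mod_cast hδ
    linarith

lemma log_div_add_pow_le_two_mul_one_add_log_div {δ : ℕ} (hδ : 4 ≤ δ) :
    log (δ + 1) / (δ + 1) + (1 - log (δ + 1) / (δ + 1)) ^ (δ + 1) +
        ((log (δ + 1) / (δ + 1)) ^ δ + (1 - log (δ + 1) / (δ + 1)) ^ δ) ≤
      2 * (1 + log (δ + 1)) / (δ + 1) := by
  set x : ℝ := δ + 1 with hx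
  set p := log x / x with hp
  have hx5 : 5 ≤ x := by rw [hx]; exact_mod_cast Nat.succ_le_succ hδ
  have hx0 : 0 < x := by linarith
  have hL := four_thirds_le_log (by linarith : 4 ≤ x)
  have hp0 : 0 ≤ p := div_nonneg (by linarith) hx0.le
  have hp_half : p ≤ 1 / 2 := log_div_self_le_half hx0
  have hq_succ : (1 - p) ^ (δ + 1) ≤ 1 / x := by
    calc (1 - p) ^ (δ + 1) ≤ exp (-p) ^ (δ + 1) :=
          pow_le_pow_left₀ (by linarith) (one_sub_le_exp_neg p) _
      _ = 1 / x := by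
          rw [← exp_nat_mul, Nat.cast_succ, ← hx, hp, mul_neg, mul_div_cancel₀ _ hx0.ne',
            exp_neg, exp_log hx0, one_div]
  have hq : (1 - p) ^ δ ≤ 2 / x := by
    have h : (1 - p) ^ δ * (1 - p) ≤ 1 / x := by rwa [← pow_succ]
    have h2 : 0 ≤ (1 - p) ^ δ := pow_nonneg (by linarith) _
    rw [div_eq_mul_one_div 2]
    nlinarith
  have hpδ : p ^ δ ≤ 1 / (3 * x) := by
    have h2 : (3 * x : ℝ) ≤ 2 ^ δ := by
      rw [hx]; exact_mod_cast three_mul_succ_le_two_pow hδ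
    calc p ^ δ ≤ (1 / 2) ^ δ := pow_le_pow_left₀ hp0 hp_half δ
      _ = 1 / 2 ^ δ := by rw [one_div_pow]
      _ ≤ 1 / (3 * x) := one_div_le_one_div_of_le (by positivity) h2
  have hsum : p + 1 / x + (1 / (3 * x) + 2 / x) = (log x + 10 / 3) / x := by
    rw [hp]; field_simp; ring
  have hfin : (log x + 10 / 3) / x ≤ 2 * (1 + log x) / x :=
    div_le_div_of_nonneg_right (by linarith) hx0.le
  linarith

theorem stmt_15_general {V : Type*} [Fintype V] (G : SimpleGraph V) [DecidableRel G.Adj]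
    (n : ℕ) (hn : n = Fintype.card V)
    (δ : ℕ) (hδ : δ = G.minDegree) :
    (restrainedDominationNumber G : ℝ) ≤
      2 * (1 + Real.log (δ + 1)) / (δ + 1) * n := by
  classical
  subst hn
  have hdeg : ∀ v, δ ≤ G.degree v := fun v ↦ hδ ▸ G.minDegree_le_degree v
  rcases le_or_gt δ 3 with hδ3 | hδ4
  · have huniv : IsRestrainedDominatingSet G univ := by simp [IsRestrainedDominatingSet]
    calc (restrainedDominationNumber G : ℝ) ≤ 1 * Fintype.card V := by
          simpa using restrainedDominationNumber_le_card huniv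
      _ ≤ _ := by gcongr; exact one_le_two_mul_one_add_log_div hδ3
  · set p := log (δ + 1) / (δ + 1)
    have hx : (0 : ℝ) < δ + 1 := by positivity
    have hp0 : 0 ≤ p := div_nonneg (log_nonneg (by simp)) hx.le
    have hp1 : p < 1 := (log_div_self_le_half hx).trans_lt (by norm_num)
    obtain ⟨A, hA⟩ := exists_le_sum_bernoulliWeight_mul hp0 hp1.le
      fun A ↦ (#(G.restrainedCompletion A) : ℝ)
    calc (restrainedDominationNumber G : ℝ) ≤ #(G.restrainedCompletion A) := by
          exact_mod_cast restrainedDominationNumber_le_card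
            (G.isRestrainedDominatingSet_restrainedCompletion A)
      _ ≤ Fintype.card V * (p + (1 - p) ^ (δ + 1) + (p ^ δ + (1 - p) ^ δ)) :=
          hA.trans (G.sum_bernoulliWeight_mul_card_restrainedCompletion_le hp0 hp1 hdeg)
      _ ≤ Fintype.card V * (2 * (1 + log (δ + 1)) / (δ + 1)) := by
          gcongr; exact log_div_add_pow_le_two_mul_one_add_log_div hδ4
      _ = _ := mul_comm _ _

/-- For a connected graph `G` with `n` vertices and minimum degree `δ`,
`γ_r(G) ≤ 2n(1 + ln(δ + 1))/(δ + 1)`. -/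
theorem stmt_15 {V : Type*} [Fintype V] (G : SimpleGraph V) [DecidableRel G.Adj]
    (hconn : G.Connected) (n : ℕ) (hn : n = Fintype.card V)
    (δ : ℕ) (hδ : δ = G.minDegree) :
    (restrainedDominationNumber G : ℝ) ≤
      2 * (1 + Real.log (δ + 1)) / (δ + 1) * n :=
  stmt_15_general G n hn δ hδ
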